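/- arXiv:2201.06756 — 2 statements merged into one kernel-verified Lean document; each statement's English description precedes it below -/
import Mathlib

section
/- Every weakly polymatroidal monomial ideal has linear quotients. -/
open MvPolynomial

namespace Paper

abbrev R (K : Type) [Field K] (n : ℕ) := MvPolynomial (Fin n) K

noncomputable def mon (K : Type) [Field K] {n : ℕ} (a : Fin n →₀ ℕ) : R K n :=
  monomial a 1

def mdeg {n : ℕ} (a : Fin n →₀ ℕ) : ℕ := a.sum fun _ e => e

def IsSqfree {n : ℕ} (a : Fin n →₀ ℕ) : Prop := ∀ i, a i ≤ 1

variable {K : Type} [Field K] {n : ℕ}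

/-- A monomial ideal: an ideal generated by a set of monomials. -/
def IsMonomialIdeal (I : Ideal (R K n)) : Prop :=
  ∃ S : Set (Fin n →₀ ℕ), I = Ideal.span ((mon K) '' S)

/-- The (exponent vectors of the) minimal monomial generators `G(I)` of a monomial
ideal: monomials in `I` such that no proper divisor lies in `I`. -/
def minGens (I : Ideal (R K n)) : Set (Fin n →₀ ℕ) :=
  { a | mon K a ∈ I ∧ ∀ (b : Fin n →₀ ℕ) (i : Fin n),
      a = b + Finsupp.single i 1 → mon K b ∉ I }

/-- Polymatroidal: a monomial ideal generated in a single degree satisfying the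
exchange property. -/
def IsPolymatroidal (I : Ideal (R K n)) : Prop :=
  IsMonomialIdeal I ∧
  (∃ d, ∀ a ∈ minGens I, mdeg a = d) ∧
  ∀ u ∈ minGens I, ∀ v ∈ minGens I, ∀ i : Fin n, v i < u i →
    ∃ j : Fin n, u j < v j ∧
      ∃ w ∈ minGens I, w + Finsupp.single i 1 = u + Finsupp.single j 1

/-- Matroidal: squarefree polymatroidal. -/
def IsMatroidal (I : Ideal (R K n)) : Prop :=
  IsPolymatroidal I ∧ ∀ a ∈ minGens I, IsSqfree a

/-- Weakly polymatroidal with respect to the variable ordering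
`x_{σ 0} > x_{σ 1} > ... > x_{σ (n-1)}`. -/
def IsWeaklyPolymatroidalWrt (σ : Equiv.Perm (Fin n)) (I : Ideal (R K n)) : Prop :=
  IsMonomialIdeal I ∧
  ∀ u ∈ minGens I, ∀ v ∈ minGens I, ∀ t : Fin n,
    (∀ s, s < t → u (σ s) = v (σ s)) → v (σ t) < u (σ t) →
    ∃ j : Fin n, t < j ∧
      ∃ w : Fin n →₀ ℕ,
        w + Finsupp.single (σ j) 1 = v + Finsupp.single (σ t) 1 ∧ mon K w ∈ I

/-- Weakly polymatroidal with respect to the standard ordering `x_1 > ... > x_n`. -/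
def IsWeaklyPolymatroidal (I : Ideal (R K n)) : Prop :=
  IsWeaklyPolymatroidalWrt (Equiv.refl (Fin n)) I

/-- Vertex splittable monomial ideals (Moradi–Khosh-Ahang). Ideals of
`K[V \ {x}]` are encoded as ideals of `R` whose minimal generators do not
involve the variable `x`. -/
inductive VertexSplittable : Ideal (R K n) → Prop
  | principal (a : Fin n →₀ ℕ) : VertexSplittable (Ideal.span {mon K a})
  | bot : VertexSplittable ⊥
  | top : VertexSplittable ⊤
  | split (x : Fin n) (I₁ I₂ : Ideal (R K n)) :
      VertexSplittable I₁ → VertexSplittable I₂ →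
      (∀ a ∈ minGens I₁, a x = 0) → (∀ a ∈ minGens I₂, a x = 0) →
      I₂ ≤ I₁ →
      minGens (Ideal.span {(X x : R K n)} * I₁ + I₂)
        = minGens (Ideal.span {(X x : R K n)} * I₁) ∪ minGens I₂ →
      minGens (Ideal.span {(X x : R K n)} * I₁) ∩ minGens I₂ = ∅ →
      VertexSplittable (Ideal.span {(X x : R K n)} * I₁ + I₂)

/-- Linear quotients: some ordering of the minimal monomial generators such that
each successive colon ideal is generated by a subset of the variables. -/
def HasLinearQuotients (I : Ideal (R K n)) : Prop :=
  IsMonomialIdeal I ∧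
  ∃ L : List (Fin n →₀ ℕ), L.Nodup ∧ {a | a ∈ L} = minGens I ∧
    ∀ (j : ℕ) (hj : j < L.length), 0 < j →
      ∃ S : Set (Fin n),
        Submodule.colon (Ideal.span ((mon K) '' {a | a ∈ L.take j}))
            (Ideal.span {mon K (L.get ⟨j, hj⟩)})
          = Ideal.span ((fun i => (X i : R K n)) '' S)


/-- A (possibly void) abstract simplicial complex on the vertex set `Fin n`. -/
structure SComplex (n : ℕ) where
  faces : Finset (Finset (Fin n))
  down : ∀ F ∈ faces, ∀ G ⊆ F, G ∈ faces

variable {n : ℕ}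

def SComplex.IsFacet (Δ : SComplex n) (F : Finset (Fin n)) : Prop :=
  F ∈ Δ.faces ∧ ∀ G ∈ Δ.faces, F ⊆ G → G = F

/-- Deletion of a vertex. -/
def SComplex.del (Δ : SComplex n) (x : Fin n) : SComplex n where
  faces := Δ.faces.filter (fun F => x ∉ F)
  down := by
    intro F hF G hG
    simp only [Finset.mem_filter] at *
    exact ⟨Δ.down F hF.1 G hG, fun hx => hF.2 (hG hx)⟩

/-- Link of a vertex. -/
def SComplex.lk (Δ : SComplex n) (x : Fin n) : SComplex n where
  faces := Δ.faces.filter (fun F => x ∉ F ∧ insert x F ∈ Δ.faces)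
  down := by
    intro F hF G hG
    simp only [Finset.mem_filter] at *
    refine ⟨Δ.down F hF.1 G hG, fun hx => hF.2.1 (hG hx), ?_⟩
    exact Δ.down _ hF.2.2 _ (Finset.insert_subset_insert x hG)

/-- Vertex decomposability, defined recursively via shedding vertices. -/
inductive VertexDecomposable : SComplex n → Prop
  | simplex (Δ : SComplex n) (F : Finset (Fin n)) :
      Δ.faces = F.powerset → VertexDecomposable Δ
  | shed (Δ : SComplex n) (x : Fin n) :
      VertexDecomposable (Δ.del x) → VertexDecomposable (Δ.lk x) →
      (∀ F ∈ (Δ.lk x).faces, ¬ (Δ.del x).IsFacet F) →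
      VertexDecomposable Δ

/-- Shellability (non-pure, Björner–Wachs). -/
def SComplex.Shellable (Δ : SComplex n) : Prop :=
  ∃ L : List (Finset (Fin n)), L.Nodup ∧ {F | F ∈ L} = {F | Δ.IsFacet F} ∧
    ∀ (i j : ℕ) (hi : i < L.length) (hj : j < L.length), i < j →
      ∃ x ∈ L.get ⟨j, hj⟩ \ L.get ⟨i, hi⟩,
        ∃ (l : ℕ) (hl : l < j),
          L.get ⟨j, hj⟩ \ L.get ⟨l, Nat.lt_trans hl hj⟩ = {x}

/-- The Alexander dual complex `Δ^∨ = { V \ A : A ∉ Δ }`. -/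
noncomputable def SComplex.dual (Δ : SComplex n) : SComplex n where
  faces := Finset.univ.filter (fun B => Bᶜ ∉ Δ.faces)
  down := by
    classical
    intro F hF G hG
    simp only [Finset.mem_filter, Finset.mem_univ, true_and] at *
    intro hGc
    exact hF (Δ.down _ hGc _ (Finset.compl_subset_compl.2 hG))


/-- The squarefree exponent vector of a set of vertices. -/
noncomputable def sqmon {n : ℕ} (F : Finset (Fin n)) : Fin n →₀ ℕ :=
  ∑ i ∈ F, Finsupp.single i 1

/-- The Stanley–Reisner ideal of `Δ`. -/
noncomputable def srIdeal (K : Type) [Field K] {n : ℕ} (Δ : SComplex n) :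
    Ideal (MvPolynomial (Fin n) K) :=
  Ideal.span ((fun F => mon K (sqmon F)) '' {F | F ∉ Δ.faces})


section CM
variable (A : Type) [CommRing A]

/-- Krull dimension of a module: the dimension of `A / ann M`. -/
noncomputable def moduleDim (M : Type) [AddCommGroup M] [Module A M] : WithBot ℕ∞ :=
  ringKrullDim (A ⧸ Submodule.annihilator (⊤ : Submodule A M))

/-- `rs` is an `M`-regular sequence: each entry is a nonzerodivisor on the quotient
of `M` by the previous entries. -/
def IsRegSeq (M : Type) [AddCommGroup M] [Module A M] (rs : List A) : Prop :=
  ∀ (i : ℕ) (hi : i < rs.length),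
    ∀ m : M ⧸ (Ideal.span {r | r ∈ rs.take i} • (⊤ : Submodule A M)),
      rs.get ⟨i, hi⟩ • m = 0 → m = 0

/-- Depth of `M` with respect to the ideal `J`: the supremum of lengths of
`M`-regular sequences contained in `J`. -/
noncomputable def moduleDepth (J : Ideal A) (M : Type) [AddCommGroup M] [Module A M] : ℕ :=
  sSup {k | ∃ rs : List A, rs.length = k ∧ (∀ r ∈ rs, r ∈ J) ∧ IsRegSeq A M rs}

/-- Cohen–Macaulay module (with respect to the ideal `J` playing the role of the
maximal ideal): zero, or depth equals Krull dimension. -/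
def IsCMmod (J : Ideal A) (M : Type) [AddCommGroup M] [Module A M] : Prop :=
  Subsingleton M ∨ moduleDim A M = ((moduleDepth A J M : ℕ∞) : WithBot ℕ∞)

/-- Sequentially Cohen–Macaulay module: a filtration `0 = M₀ ⊂ ... ⊂ M_r = N` with
Cohen–Macaulay quotients of strictly increasing Krull dimension. -/
def IsSeqCM (J : Ideal A) (N : Type) [AddCommGroup N] [Module A N] : Prop :=
  ∃ (r : ℕ) (c : Fin (r + 1) → Submodule A N),
    c 0 = ⊥ ∧ c (Fin.last r) = ⊤ ∧
    (∀ i : Fin r, c i.castSucc ≤ c i.succ) ∧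
    (∀ i : Fin r,
      IsCMmod A J (↥(c i.succ) ⧸ (Submodule.comap (c i.succ).subtype (c i.castSucc)))) ∧
    (∀ i j : Fin r, i < j →
      moduleDim A (↥(c i.succ) ⧸ (Submodule.comap (c i.succ).subtype (c i.castSucc)))
        < moduleDim A (↥(c j.succ) ⧸ (Submodule.comap (c j.succ).subtype (c j.castSucc))))

end CM

variable {K : Type} [Field K] {n : ℕ}

/-- The irrelevant maximal ideal `(x_1, ..., x_n)`. -/
noncomputable def maxIdeal (K : Type) [Field K] (n : ℕ) : Ideal (MvPolynomial (Fin n) K) :=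
  Ideal.span (Set.range (X : Fin n → MvPolynomial (Fin n) K))

section Res

/-- The differential of a free complex given by a matrix of polynomials. -/
noncomputable def resDiff (β : ℕ → ℕ)
    (Mt : (i : ℕ) → Fin (β (i + 1)) → Fin (β i) → MvPolynomial (Fin n) K) (i : ℕ) :
    (Fin (β (i + 1)) →₀ MvPolynomial (Fin n) K) →ₗ[MvPolynomial (Fin n) K]
      (Fin (β i) →₀ MvPolynomial (Fin n) K) :=
  Finsupp.lsum (MvPolynomial (Fin n) K) fun j =>
    LinearMap.toSpanSingleton (MvPolynomial (Fin n) K) _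
      (∑ k : Fin (β i), Finsupp.single k (Mt i j k))

/-- The augmentation map sending basis elements to the generators `g`. -/
noncomputable def resAug (β₀ : ℕ) (g : Fin β₀ → MvPolynomial (Fin n) K) :
    (Fin β₀ →₀ MvPolynomial (Fin n) K) →ₗ[MvPolynomial (Fin n) K] MvPolynomial (Fin n) K :=
  Finsupp.lsum (MvPolynomial (Fin n) K) fun j =>
    LinearMap.toSpanSingleton (MvPolynomial (Fin n) K) _ (g j)

/-- A graded free resolution of the ideal `I`, recorded by Betti numbers `β`,
degree shifts `dg`, homogeneous generators `g` of `I`, and matrices `Mt` of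
homogeneous entries, which is exact. -/
structure GradedRes (I : Ideal (MvPolynomial (Fin n) K)) where
  β : ℕ → ℕ
  dg : (i : ℕ) → Fin (β i) → ℕ
  g : Fin (β 0) → MvPolynomial (Fin n) K
  hg : ∀ j, (g j).IsHomogeneous (dg 0 j)
  Mt : (i : ℕ) → Fin (β (i + 1)) → Fin (β i) → MvPolynomial (Fin n) K
  hMt : ∀ i j k, Mt i j k = 0 ∨
    (dg i k ≤ dg (i + 1) j ∧ (Mt i j k).IsHomogeneous (dg (i + 1) j - dg i k))
  hrange : LinearMap.range (resAug (β 0) g) = I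
  hexact0 : LinearMap.ker (resAug (β 0) g) = LinearMap.range (resDiff β Mt 0)
  hexact : ∀ i, LinearMap.ker (resDiff β Mt i) = LinearMap.range (resDiff β Mt (i + 1))

/-- Castelnuovo–Mumford regularity, as the infimum over all graded free
resolutions of the maximum of `(shift) - (homological degree)`. -/
noncomputable def reg (I : Ideal (MvPolynomial (Fin n) K)) : ℕ∞ :=
  sInf { r : ℕ∞ | ∃ Res : GradedRes I,
    ∀ (i : ℕ) (j : Fin (Res.β i)), (Res.dg i j : ℕ∞) ≤ r + i }

/-- `I` has a `d`-linear resolution. -/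
def HasLinearRes (I : Ideal (MvPolynomial (Fin n) K)) (d : ℕ) : Prop :=
  ∃ Res : GradedRes I, ∀ (i : ℕ) (j : Fin (Res.β i)), Res.dg i j = d + i

/-- The ideal generated by the degree-`d` elements of `I`. -/
noncomputable def compIdeal (I : Ideal (MvPolynomial (Fin n) K)) (d : ℕ) : Ideal (MvPolynomial (Fin n) K) :=
  Ideal.span { f | f ∈ I ∧ f.IsHomogeneous d }

/-- Componentwise linear ideal. -/
def ComponentwiseLinear (I : Ideal (MvPolynomial (Fin n) K)) : Prop :=
  ∀ d, compIdeal I d = ⊥ ∨ HasLinearRes (compIdeal I d) d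

end Res

/-! Order `G(I)` decreasingly in the lexicographic order. If a generator `g` precedes `u` and
they first differ in `x_t`, then `g_t > u_t`, and weak polymatroidality yields a generator
`w >_lex u` dividing `x_t u`: take the lex-largest generator dividing the monomial `x_t (u / x_j)`
given by the definition; were it `≤_lex u`, the same statement for an earlier variable (induction
on `t`) would produce a larger one. Hence `(g : g >_lex u) : u` is generated by the variables
`x_t` with `x_t u` in the ideal, since each `g / gcd(g, u)` is divisible by one of them. -/

theorem _root_.List.SortedGT.mem_take_iff {α : Type*} [LinearOrder α] {l : List α}
    (hl : l.SortedGT) {j : ℕ} (hj : j < l.length) {a : α} :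
    a ∈ l.take j ↔ a ∈ l ∧ l[j] < a := by
  rw [List.mem_take_iff_getElem]
  constructor
  · rintro ⟨i, hi, rfl⟩
    exact ⟨List.getElem_mem _, hl.getElem_lt_getElem_iff.2 (lt_min_iff.1 hi).1⟩
  · rintro ⟨ha, hja⟩
    obtain ⟨i, hi, rfl⟩ := List.mem_iff_getElem.1 ha
    exact ⟨i, lt_min (hl.getElem_lt_getElem_iff.1 hja) hi, rfl⟩

theorem _root_.Finset.exists_list_mem_take_iff {α β : Type*} [LinearOrder β] (e : α ≃ β)
    (S : Finset α) :
    ∃ L : List α, L.Nodup ∧ (∀ a, a ∈ L ↔ a ∈ S) ∧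
      ∀ (j : ℕ) (hj : j < L.length) (a : α), a ∈ L.take j ↔ a ∈ S ∧ e L[j] < e a := by
  set L' := (S.map e.toEmbedding).sort (· ≥ ·)
  have hL' : L'.SortedGT := Finset.sortedGT_sort _
  have hmem : ∀ (l : List β) a, a ∈ l.map e.symm ↔ e a ∈ l := fun l a => by
    simp [Equiv.symm_apply_eq]
  refine ⟨L'.map e.symm, hL'.nodup.map e.symm.injective, fun a => by simp [hmem, L'], ?_⟩
  intro j hj a
  rw [← List.map_take, hmem, hL'.mem_take_iff (by simpa using hj)]
  simp [L']

section

variable {I : Ideal (R K n)}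

theorem mon_mul (a b : Fin n →₀ ℕ) : mon K a * mon K b = mon K (a + b) := by
  simp [mon, monomial_mul]

theorem X_mul_mon (i : Fin n) (a : Fin n →₀ ℕ) :
    (X i : R K n) * mon K a = mon K (a + Finsupp.single i 1) := by
  rw [X, ← mon, mon_mul, add_comm]

theorem mon_mem_of_le {a b : Fin n →₀ ℕ} (ha : mon K a ∈ I) (hab : a ≤ b) : mon K b ∈ I := by
  rw [← tsub_add_cancel_of_le hab, ← mon_mul]
  exact I.mul_mem_left _ ha

theorem exists_mem_minGens_le {a : Fin n →₀ ℕ} (ha : mon K a ∈ I) :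
    ∃ m ∈ minGens I, m ≤ a := by
  obtain ⟨m, hma, hmin⟩ := exists_minimal_le_of_wellFoundedLT (fun b => mon K b ∈ I) a ha
  refine ⟨m, ⟨hmin.prop, fun b i hb hbI => ?_⟩, hma⟩
  have hbm : b ≤ m := hb ▸ le_self_add
  have hmb := hmin.le_of_le hbI hbm
  have := congrArg (· i) (le_antisymm hbm hmb)
  simp [hb] at this

theorem minGens_isAntichain (I : Ideal (R K n)) : IsAntichain (· ≤ ·) (minGens I) := by
  intro a ha b hb hne hab
  obtain ⟨i, hi⟩ : ∃ i, a i < b i := by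
    by_contra! h
    exact hne (le_antisymm hab (Finsupp.le_def.2 h))
  have hib : Finsupp.single i 1 ≤ b := Finsupp.single_le_iff.2 (by omega)
  refine hb.2 (b - Finsupp.single i 1) i (tsub_add_cancel_of_le hib).symm
    (mon_mem_of_le ha.1 (Finsupp.le_def.2 fun s => ?_))
  have := Finsupp.le_def.1 hab s
  rw [Finsupp.tsub_apply]
  rcases eq_or_ne s i with rfl | hsi
  · rw [Finsupp.single_eq_same]; omega
  · rw [Finsupp.single_eq_of_ne hsi]; omega

theorem minGens_finite (I : Ideal (R K n)) : (minGens I).Finite :=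
  (minGens_isAntichain I).finite_of_partiallyWellOrderedOn (Set.isPWO_of_wellQuasiOrderedLE _)

theorem colon_span_mon_eq_span_X {T : Set (Fin n →₀ ℕ)} {u : Fin n →₀ ℕ}
    (hT : ∀ g ∈ T, ∃ t, u t < g t ∧ mon K (u + Finsupp.single t 1) ∈ Ideal.span (mon K '' T)) :
    Submodule.colon (Ideal.span (mon K '' T)) (Ideal.span {mon K u})
      = Ideal.span ((fun i => (X i : R K n)) '' {i | mon K (u + Finsupp.single i 1) ∈
          Ideal.span (mon K '' T)}) := by
  apply le_antisymm
  · intro r hr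
    rw [Submodule.mem_colon_span_singleton, smul_eq_mul] at hr
    rw [mem_ideal_span_X_image]
    intro b hb
    have hbu : b + u ∈ (r * mon K u).support := by
      rw [mem_support_iff, mon, coeff_mul_monomial, mul_one]
      exact mem_support_iff.1 hb
    obtain ⟨g, hgT, hg⟩ := mem_ideal_span_monomial_image.1 hr _ hbu
    obtain ⟨t, hut, htT⟩ := hT g hgT
    have := Finsupp.le_def.1 hg t
    exact ⟨t, htT, by simp at this; omega⟩
  · rw [Ideal.span_le]
    rintro _ ⟨i, hi, rfl⟩
    rw [SetLike.mem_coe, Submodule.mem_colon_span_singleton, smul_eq_mul, X_mul_mon]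
    exact hi

theorem IsWeaklyPolymatroidal.exists_mem_minGens_lex_gt (h : IsWeaklyPolymatroidal I)
    (t : Fin n) {u v : Fin n →₀ ℕ} (hu : u ∈ minGens I) (hv : v ∈ minGens I)
    (heq : ∀ s < t, u s = v s) (hlt : v t < u t) :
    ∃ w ∈ minGens I, toLex v < toLex w ∧ w ≤ v + Finsupp.single t 1 := by
  induction t using WellFoundedLT.induction generalizing u v with
  | _ t ih =>
  obtain ⟨j, htj, w₀, hw₀, hw₀I⟩ := h.2 u hu v hv t heq hlt
  simp only [Equiv.refl_apply] at hw₀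
  have hw₀s (s : Fin n) : w₀ s + Finsupp.single j 1 s = v s + Finsupp.single t 1 s := by
    simpa only [Finsupp.add_apply] using DFunLike.congr_fun hw₀ s
  have hw₀j : w₀ j < v j := by
    have := hw₀s j
    rw [Finsupp.single_eq_same, Finsupp.single_eq_of_ne htj.ne'] at this
    omega
  have hw₀v (s : Fin n) (hst : s ≠ t) : w₀ s ≤ v s := by
    have := hw₀s s
    rw [Finsupp.single_eq_of_ne hst] at this
    omega
  have hvw₀ (s : Fin n) (hst : s < t) : v s ≤ w₀ s := by
    have := hw₀s s
    rw [Finsupp.single_eq_of_ne (hst.trans htj).ne] at this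
    omega
  obtain ⟨m, ⟨hm, hmw⟩, hmax⟩ := Set.exists_max_image {m | m ∈ minGens I ∧ m ≤ w₀} toLex
    ((minGens_finite I).subset fun _ hm => hm.1) (exists_mem_minGens_le hw₀I)
  have hmw' := Finsupp.le_def.1 hmw
  have hmv : ¬ m ≤ v := fun hmv => by
    obtain rfl := (minGens_isAntichain I).eq hm hv hmv
    exact (hmw' j).not_gt hw₀j
  refine ⟨m, hm, lt_of_not_ge fun hmv' => ?_, hmw.trans (hw₀ ▸ le_self_add)⟩
  obtain ⟨s, hsm, hs⟩ := Finsupp.Lex.lt_iff.1 (hmv'.lt_of_ne fun h => hmv (toLex_inj.1 h).le)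
  simp only [ofLex_toLex] at hsm hs
  rcases lt_or_ge s t with hst | hts
  · -- the induction hypothesis at `s` moves `m` lexicographically up while staying below `w₀`
    obtain ⟨m', hm', hmm', hm'le⟩ := ih s hst hv hm (fun r hr => (hsm r hr).symm) hs
    refine (hmax m' ⟨hm', Finsupp.le_def.2 fun r => ?_⟩).not_gt hmm'
    have h1 := Finsupp.le_def.1 hm'le r
    rcases eq_or_ne r s with rfl | hrs
    · have := hvw₀ r hst
      simp at h1
      omega
    · rw [Finsupp.add_apply, Finsupp.single_eq_of_ne hrs, add_zero] at h1
      exact h1.trans (hmw' r)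
  · refine hmv (Finsupp.le_def.2 fun r => ?_)
    rcases eq_or_ne r t with rfl | hrt
    · rcases hts.lt_or_eq with hts | rfl
      · exact (hsm _ hts).le
      · exact hs.le
    · exact (hmw' r).trans (hw₀v r hrt)

end

/-- Every weakly polymatroidal monomial ideal has linear quotients. -/
theorem stmt2 {K : Type} [Field K] {n : ℕ} (I : Ideal (R K n))
    (h : IsWeaklyPolymatroidal I) : HasLinearQuotients I := by
  refine ⟨h.1, ?_⟩
  have hfin := minGens_finite I
  -- list the minimal generators in decreasing lexicographic order
  obtain ⟨L, hnd, hmem, htake⟩ := hfin.toFinset.exists_list_mem_take_iff toLex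
  refine ⟨L, hnd, Set.ext fun a => (hmem a).trans hfin.mem_toFinset, fun j hj _ => ?_⟩
  have hu : L[j] ∈ minGens I := hfin.mem_toFinset.1 ((hmem _).1 (List.getElem_mem hj))
  have hT : {a | a ∈ L.take j} = {a | a ∈ minGens I ∧ toLex L[j] < toLex a} := by
    ext a
    exact (htake j hj a).trans (and_congr_left' hfin.mem_toFinset)
  rw [List.get_eq_getElem, hT]
  refine ⟨_, colon_span_mon_eq_span_X fun g ⟨hg, hug⟩ => ?_⟩
  obtain ⟨t, heq, hlt⟩ := Finsupp.Lex.lt_iff.1 hug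
  obtain ⟨w, hw, huw, hwle⟩ :=
    h.exists_mem_minGens_lex_gt t hg hu (fun s hs => (heq s hs).symm) hlt
  exact ⟨t, hlt, mon_mem_of_le (Ideal.subset_span ⟨w, ⟨hw, huw⟩, rfl⟩) hwle⟩

end Paper
end

section
/- The ideal I = (x_1x_2, x_2x_3, x_3x_4) in K[x_1,x_2,x_3,x_4] is vertex splittable (via the splitting I = x_2(x_1,x_3) + (x_3x_4)) but is not a matroidal ideal. -/
open MvPolynomial

namespace Paper

variable {K : Type} [Field K] {n : ℕ}

variable {n : ℕ}

variable {K : Type} [Field K] {n : ℕ}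

/-!
For a monomial ideal generated by an antichain `S` of exponent vectors, the minimal generators
are exactly `S`; this turns every condition in the definition of a vertex splitting into a
statement about finite sets of exponent vectors. Splitting at `x₂` and then `(x₁, x₃)` at `x₁`,
with the principal ideals `(1)`, `(x₃)`, `(x₃x₄)` at the leaves, shows vertex splittability.
The exchange property fails for `u = x₁x₂`, `v = x₃x₄` and `i = 2`: the exchange would have to
produce `x₁x₃` or `x₁x₄`, neither of which is a generator. (Here `xₖ` is `X (k - 1)`.)
-/

section MonomialIdeal

variable {K : Type} [Field K] {n : ℕ}

open Finsupp (single)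

lemma mon_add (a b : Fin n →₀ ℕ) : mon K (a + b) = mon K a * mon K b := by
  simp [mon, monomial_mul]

lemma mon_single (i : Fin n) : mon K (single i 1) = X i := rfl

lemma mon_mem_span_mon_iff {S : Set (Fin n →₀ ℕ)} {a : Fin n →₀ ℕ} :
    mon K a ∈ Ideal.span (mon K '' S) ↔ ∃ s ∈ S, s ≤ a := by
  change monomial a 1 ∈ Ideal.span ((monomial · 1) '' S) ↔ _
  simp [mem_ideal_span_monomial_image]

lemma exists_le_add_single_eq_of_lt {s a : Fin n →₀ ℕ} (h : s < a) :
    ∃ b i, a = b + single i 1 ∧ s ≤ b := by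
  obtain ⟨c, hc, rfl⟩ := lt_iff_exists_pos_add.mp h
  obtain ⟨i, hi⟩ := Finsupp.ne_iff.mp hc.ne'
  have hci : single i 1 ≤ c := Finsupp.single_le_iff.mpr (Nat.one_le_iff_ne_zero.mpr hi)
  exact ⟨s + (c - single i 1), i, by rw [add_assoc, tsub_add_cancel_of_le hci], le_self_add⟩

lemma minGens_span_mon {S : Set (Fin n →₀ ℕ)} (hS : IsAntichain (· ≤ ·) S) :
    minGens (Ideal.span (mon K '' S)) = S := by
  ext a
  simp only [minGens, Set.mem_ofPred_eq, mon_mem_span_mon_iff, not_exists, not_and]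
  constructor
  · rintro ⟨⟨s, hs, hsa⟩, hmin⟩
    obtain rfl | hlt := hsa.eq_or_lt
    · exact hs
    obtain ⟨b, i, rfl, hsb⟩ := exists_le_add_single_eq_of_lt hlt
    exact absurd hsb (hmin b i rfl s hs)
  · intro ha
    refine ⟨⟨a, ha, le_rfl⟩, ?_⟩
    rintro b i rfl s hs hsb
    exact hS.not_lt hs ha (hsb.trans_lt (lt_add_of_pos_right b (by simp [pos_iff_ne_zero])))

lemma span_X_mul_span_mon (x : Fin n) (S : Set (Fin n →₀ ℕ)) :
    Ideal.span {(X x : R K n)} * Ideal.span (mon K '' S)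
      = Ideal.span (mon K '' ((· + single x 1) '' S)) := by
  rw [Ideal.span_mul_span', Set.singleton_mul, Set.image_image, Set.image_image]
  simp_rw [mon_add, mon_single, mul_comm]

theorem VertexSplittable.span_mon_union {x : Fin n} {S₁ S₂ : Set (Fin n →₀ ℕ)}
    (h₁ : VertexSplittable (Ideal.span (mon K '' S₁)))
    (h₂ : VertexSplittable (Ideal.span (mon K '' S₂)))
    (hS₁x : ∀ s ∈ S₁, s x = 0) (hS₂x : ∀ s ∈ S₂, s x = 0)
    (hS₂₁ : ∀ t ∈ S₂, ∃ s ∈ S₁, s ≤ t)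
    (hS : IsAntichain (· ≤ ·) ((· + single x 1) '' S₁ ∪ S₂)) :
    VertexSplittable (Ideal.span (mon K '' ((· + single x 1) '' S₁ ∪ S₂))) := by
  have hS₁ : IsAntichain (· ≤ ·) S₁ := by
    have := (hS.subset Set.subset_union_left).preimage (add_left_injective (single x 1))
      fun _ _ h => add_le_add_left h _
    rwa [Set.preimage_image_eq _ (add_left_injective _)] at this
  have hxS₁ : ∀ t ∈ (· + single x 1) '' S₁, t x ≠ 0 := by
    rintro _ ⟨s, -, rfl⟩
    simp
  have hsplit := VertexSplittable.split x _ _ h₁ h₂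
    (by rwa [minGens_span_mon hS₁]) (by rwa [minGens_span_mon (hS.subset Set.subset_union_right)])
    (Ideal.span_le.mpr ?_) ?_ ?_
  · rwa [span_X_mul_span_mon, Submodule.add_eq_sup, ← Ideal.span_union, ← Set.image_union] at hsplit
  · rintro _ ⟨t, ht, rfl⟩
    exact mon_mem_span_mon_iff.mpr (hS₂₁ t ht)
  · rw [span_X_mul_span_mon, Submodule.add_eq_sup, ← Ideal.span_union, ← Set.image_union,
      minGens_span_mon hS, minGens_span_mon (hS.subset Set.subset_union_left),
      minGens_span_mon (hS.subset Set.subset_union_right)]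
  · rw [span_X_mul_span_mon, minGens_span_mon (hS.subset Set.subset_union_left),
      minGens_span_mon (hS.subset Set.subset_union_right), Set.eq_empty_iff_forall_notMem]
    rintro t ⟨ht₁, ht₂⟩
    exact hxS₁ t ht₁ (hS₂x t ht₂)

end MonomialIdeal

section PathIdeal

variable {K : Type} [Field K]

open Finsupp (single)

noncomputable def pathEdgeExps : Set (Fin 4 →₀ ℕ) :=
  {single 0 1 + single 1 1, single 1 1 + single 2 1, single 2 1 + single 3 1}

lemma span_X_mul_X_eq_span_mon_pathEdgeExps :
    Ideal.span {(X 0 * X 1 : R K 4), X 1 * X 2, X 2 * X 3} =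
      Ideal.span (mon K '' pathEdgeExps) := by
  simp [pathEdgeExps, Set.image_insert_eq, mon_add, mon_single]

lemma isAntichain_pathEdgeExps : IsAntichain (· ≤ ·) pathEdgeExps := by
  simp [pathEdgeExps, IsAntichain, Set.Pairwise, Finsupp.le_def, Fin.forall_fin_succ]

lemma vertexSplittable_span_X0_X2 :
    VertexSplittable (Ideal.span (mon K '' ({single 0 1, single 2 1} : Set (Fin 4 →₀ ℕ)))) := by
  have hunion : (· + single 0 1) '' {0} ∪ {single 2 1} =
      ({single 0 1, single 2 1} : Set (Fin 4 →₀ ℕ)) := by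
    rw [Set.image_singleton, zero_add, Set.singleton_union]
  rw [← hunion]
  refine VertexSplittable.span_mon_union (by simpa using VertexSplittable.principal 0)
    (by simpa using VertexSplittable.principal _) (by simp) (by simp) (by simp) ?_
  rw [hunion]
  simp [IsAntichain, Set.Pairwise, Finsupp.le_def, Fin.forall_fin_succ]

lemma vertexSplittable_span_mon_pathEdgeExps :
    VertexSplittable (Ideal.span (mon K '' pathEdgeExps)) := by
  have hunion : (· + single 1 1) '' {single 0 1, single 2 1} ∪ {single 2 1 + single 3 1} =
      pathEdgeExps := by
    ext
    simp only [pathEdgeExps, Set.image_insert_eq, Set.image_singleton, Set.mem_union,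
      Set.mem_insert_iff, Set.mem_singleton_iff, add_comm (single (2 : Fin 4) 1) (single 1 1)]
    tauto
  rw [← hunion]
  refine VertexSplittable.span_mon_union vertexSplittable_span_X0_X2
    (by simpa using VertexSplittable.principal _) (by simp) (by simp) (by simp) ?_
  rw [hunion]
  exact isAntichain_pathEdgeExps

lemma not_isMatroidal_span_mon_pathEdgeExps :
    ¬ IsMatroidal (Ideal.span (mon K '' pathEdgeExps)) := by
  rintro ⟨⟨-, -, hexchange⟩, -⟩
  rw [minGens_span_mon isAntichain_pathEdgeExps] at hexchange
  obtain ⟨j, hj, w, hw, hw_eq⟩ := hexchange (single 0 1 + single 1 1) (by simp [pathEdgeExps])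
    (single 2 1 + single 3 1) (by simp [pathEdgeExps]) 1 (by simp)
  have hj0 : j ≠ 0 := by rintro rfl; simp at hj
  have hj1 : j ≠ 1 := by rintro rfl; simp at hj
  have hw0 : w 0 = 1 := by simpa [Finsupp.single_apply, hj0] using congr($hw_eq 0)
  have hw1 : w 1 = 0 := by simpa [Finsupp.single_apply, hj1] using congr($hw_eq 1)
  simp only [pathEdgeExps, Set.mem_insert_iff, Set.mem_singleton_iff] at hw
  rcases hw with rfl | rfl | rfl <;> simp at hw0 hw1

end PathIdeal

/-- `I = (x₁x₂, x₂x₃, x₃x₄)` is vertex splittable but not matroidal. -/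
theorem stmt18 (K : Type) [Field K] :
    VertexSplittable (Ideal.span {(X 0 * X 1 : R K 4), X 1 * X 2, X 2 * X 3}) ∧
    ¬ IsMatroidal (Ideal.span {(X 0 * X 1 : R K 4), X 1 * X 2, X 2 * X 3}) := by
  rw [span_X_mul_X_eq_span_mon_pathEdgeExps]
  exact ⟨vertexSplittable_span_mon_pathEdgeExps, not_isMatroidal_span_mon_pathEdgeExps⟩

end Paper
end
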